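/- Let K and G be groups and let S be a proper subgroup of K. In the restricted wreath product W = K ≀ G, the set H_S = {(f, 1_G) : f ∈ B(K,G), f(1_G) ∈ S} is a subgroup of W, and its normalizer is N_W(H_S) = {(f, 1_G) : f ∈ B(K,G), f(1_G) ∈ N_K(S)}. -/

import Mathlib

open scoped Classical

/-- The base group `B(K,G)` of the restricted wreath product: finitely supported
functions `G → K` under pointwise multiplication. -/
def baseGroup (K G : Type) [Group K] [Group G] : Subgroup (G → K) where
  carrier := {f | (Function.mulSupport f).Finite}
  one_mem' := by
    show (Function.mulSupport (1 : G → K)).Finite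
    exact Set.finite_empty.subset (fun x hx => (hx rfl).elim)
  mul_mem' := by
    intro f g hf hg
    show (Function.mulSupport (f * g)).Finite
    exact ((Set.Finite.union hf hg).subset (Function.mulSupport_mul f g))
  inv_mem' := by
    intro f hf
    show (Function.mulSupport (f⁻¹ : G → K)).Finite
    simpa [Function.mulSupport_inv] using hf

lemma mem_baseGroup_iff {K G : Type} [Group K] [Group G] (f : G → K) :
    f ∈ baseGroup K G ↔ (Function.mulSupport f).Finite := Iff.rfl

variable (K G : Type) [Group K] [Group G]

/-- Left-translation of a finitely supported function. -/
def shiftEquiv (g : G) : baseGroup K G ≃* baseGroup K G where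
  toFun f := ⟨fun x => (f : G → K) (g⁻¹ * x), by
    rw [mem_baseGroup_iff]
    have hf : (Function.mulSupport (f : G → K)).Finite := f.2
    refine (hf.image (fun y => g * y)).subset ?_
    intro x hx
    exact ⟨g⁻¹ * x, hx, by group⟩⟩
  invFun f := ⟨fun x => (f : G → K) (g * x), by
    rw [mem_baseGroup_iff]
    have hf : (Function.mulSupport (f : G → K)).Finite := f.2
    refine (hf.image (fun y => g⁻¹ * y)).subset ?_
    intro x hx
    exact ⟨g * x, hx, by group⟩⟩
  left_inv f := by
    ext x
    simp
  right_inv f := by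
    ext x
    simp
  map_mul' f₁ f₂ := by
    ext x
    rfl

/-- The left-translation action of `G` on `B(K,G)` as a homomorphism into automorphisms. -/
def shiftHom : G →* MulAut (baseGroup K G) where
  toFun := shiftEquiv K G
  map_one' := by
    ext f x
    simp [shiftEquiv]
  map_mul' g₁ g₂ := by
    ext f x
    simp [shiftEquiv, mul_assoc]

/-- The restricted wreath product `K ≀ G`. -/
abbrev wreath := (baseGroup K G) ⋊[shiftHom K G] G

/-- `ι(k) ∈ B(K,G)`: the function equal to `k` at `1` and `1` elsewhere. -/
noncomputable def iota (k : K) : baseGroup K G :=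
  ⟨fun x => if x = 1 then k else 1, by
    rw [mem_baseGroup_iff]
    refine (Set.finite_singleton (1 : G)).subset ?_
    intro x hx
    by_contra h
    exact hx (if_neg h)⟩

/-!
Conjugating `(u, 1)` by `w = (f, g)` gives `(f · (g · u) · f⁻¹, 1)`, whose value at `1` is
`f(1) · u(g⁻¹) · f(1)⁻¹`. If `g ≠ 1`, a function `u` supported at `g⁻¹` gives an element of `H_S`
whose conjugate may take any value at `1`, in particular one outside the proper subgroup `S`; so
the normalizer lies in the base group. For `g = 1` the value is `f(1) · u(1) · f(1)⁻¹`, so `w`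
normalizes `H_S` exactly when `f(1)` normalizes `S`.
-/

namespace wreath

variable {K G}

lemma mul_left_apply (w v : wreath K G) (x : G) :
    ((w * v).left : G → K) x = (w.left : G → K) x * (v.left : G → K) (w.right⁻¹ * x) := rfl

lemma inv_left_apply (w : wreath K G) (x : G) :
    (w⁻¹.left : G → K) x = ((w.left : G → K) (w.right * x))⁻¹ := by
  change ((w.left : G → K) (w.right⁻¹⁻¹ * x))⁻¹ = _
  rw [inv_inv]

lemma conj_right (w h : wreath K G) :
    (w * h * w⁻¹).right = w.right * h.right * w.right⁻¹ := rfl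

lemma conj_left_apply_one (w h : wreath K G) (hh : h.right = 1) :
    ((w * h * w⁻¹).left : G → K) 1 =
      (w.left : G → K) 1 * (h.left : G → K) w.right⁻¹ * ((w.left : G → K) 1)⁻¹ := by
  rw [mul_left_apply, inv_left_apply, mul_left_apply, SemidirectProduct.mul_right, hh]
  simp

noncomputable def single (a : G) (k : K) : wreath K G :=
  ⟨⟨(Pi.mulSingle a k : G → K), (Set.finite_singleton a).subset Pi.mulSupport_mulSingle_subset⟩, 1⟩

lemma single_left_apply (a : G) (k : K) (x : G) :
    ((single a k : wreath K G).left : G → K) x = if x = a then k else 1 :=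
  Pi.mulSingle_apply a k x

lemma single_right (a : G) (k : K) : (single a k : wreath K G).right = 1 := rfl

variable (G) in
/-- The subgroup `H_S`. -/
def evalOneSubgroup (S : Subgroup K) : Subgroup (wreath K G) where
  carrier := {w | w.right = 1 ∧ (w.left : G → K) 1 ∈ S}
  one_mem' := ⟨rfl, S.one_mem⟩
  mul_mem' := by
    rintro a b ⟨ha, haS⟩ ⟨hb, hbS⟩
    refine ⟨by rw [SemidirectProduct.mul_right, ha, hb, one_mul], ?_⟩
    rw [mul_left_apply, ha, inv_one, one_mul]
    exact S.mul_mem haS hbS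
  inv_mem' := by
    rintro a ⟨ha, haS⟩
    refine ⟨by rw [SemidirectProduct.inv_right, ha, inv_one], ?_⟩
    rw [inv_left_apply, ha, one_mul]
    exact S.inv_mem haS

variable {S : Subgroup K}

lemma mem_evalOneSubgroup_iff (w : wreath K G) :
    w ∈ evalOneSubgroup G S ↔ w.right = 1 ∧ (w.left : G → K) 1 ∈ S := Iff.rfl

lemma right_eq_one_of_mem_normalizer (hS : S ≠ ⊤) {w : wreath K G}
    (hw : w ∈ Subgroup.normalizer (evalOneSubgroup G S : Set (wreath K G))) : w.right = 1 := by
  obtain ⟨k, hk⟩ : ∃ k, k ∉ S := by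
    by_contra! h
    exact hS (Subgroup.eq_top_iff' S |>.mpr h)
  by_contra hg
  set a := (w.left : G → K) 1
  let h : wreath K G := single w.right⁻¹ (a⁻¹ * k * a)
  have hh : h ∈ evalOneSubgroup G S :=
    ⟨rfl, by simp [h, single_left_apply, Ne.symm (inv_ne_one.mpr hg)]⟩
  have hconj := ((Subgroup.mem_normalizer_iff.mp hw h).mp hh).2
  rw [conj_left_apply_one w h rfl] at hconj
  exact hk (by simpa [h, a, single_left_apply, mul_assoc] using hconj)

lemma mem_normalizer_iff_of_right_eq_one {w : wreath K G} (hw : w.right = 1) :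
    w ∈ Subgroup.normalizer (evalOneSubgroup G S : Set (wreath K G)) ↔
      (w.left : G → K) 1 ∈ Subgroup.normalizer (S : Set K) := by
  have conj_mem_iff : ∀ h : wreath K G, h.right = 1 →
      (w * h * w⁻¹ ∈ evalOneSubgroup G S ↔
        (w.left : G → K) 1 * (h.left : G → K) 1 * ((w.left : G → K) 1)⁻¹ ∈ S) := by
    intro h hh
    rw [mem_evalOneSubgroup_iff, conj_right, conj_left_apply_one w h hh, hw, hh]
    simp
  simp only [Subgroup.mem_normalizer_iff]
  constructor
  · intro hN k
    simpa [mem_evalOneSubgroup_iff, conj_mem_iff _ (single_right 1 k), single_right,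
      single_left_apply] using hN (single 1 k)
  · intro hN h
    by_cases hh : h.right = 1
    · rw [conj_mem_iff h hh, mem_evalOneSubgroup_iff]
      simpa [hh] using hN ((h.left : G → K) 1)
    · simp [mem_evalOneSubgroup_iff, hh]

lemma mem_normalizer_evalOneSubgroup_iff (hS : S ≠ ⊤) (w : wreath K G) :
    w ∈ Subgroup.normalizer (evalOneSubgroup G S : Set (wreath K G)) ↔
      w.right = 1 ∧ (w.left : G → K) 1 ∈ Subgroup.normalizer (S : Set K) :=
  ⟨fun hw => have hright := right_eq_one_of_mem_normalizer hS hw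
      ⟨hright, (mem_normalizer_iff_of_right_eq_one hright).mp hw⟩,
    fun ⟨hright, hleft⟩ => (mem_normalizer_iff_of_right_eq_one hright).mpr hleft⟩

end wreath

open wreath in
/-- For a proper subgroup `S` of `K`, the set
`H_S = {(f, 1) : f ∈ B(K,G), f(1) ∈ S}` is a subgroup of `W = K ≀ G` whose normalizer
is `{(f, 1) : f ∈ B(K,G), f(1) ∈ N_K(S)}`. -/
theorem normalizer_of_eval_subgroup (K G : Type) [Group K] [Group G]
    (S : Subgroup K) (hS : S ≠ ⊤) :
    ∃ HS : Subgroup (wreath K G),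
      (HS : Set (wreath K G)) = {w | w.right = 1 ∧ (w.left : G → K) 1 ∈ S} ∧
      (Subgroup.normalizer (HS : Set (wreath K G)) : Set (wreath K G)) =
        {w | w.right = 1 ∧ (w.left : G → K) 1 ∈ Subgroup.normalizer (S : Set K)} :=
  ⟨evalOneSubgroup G S, rfl, Set.ext fun w => mem_normalizer_evalOneSubgroup_iff hS w⟩
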